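/- Fix z ∈ Z with q_Z(z) > 0, and let ε₁, …, ε_k ∈ E satisfy q(ε_i|z) > 0 and suppose z' ↦ q(z'|ε_i) is differentiable at z with q(z|ε_i) > 0 for each i. Then the importance-sampling score-gradient estimate with proposal q(·|z) reduces pointwise to the average of conditional score gradients: ∇_{z'} log( (1/k) Σ_{i=1}^k (p_ε(ε_i) q(z'|ε_i) / q(ε_i|z)) ) evaluated at z' = z equals (1/k) Σ_{i=1}^k ∇_{z'} log q(z'|ε_i) evaluated at z' = z. -/

import Mathlib

open MeasureTheory Real

/-- Central computation in the proof of Proposition 1: with proposal `q(·|z)`, the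
IS score-gradient estimate reduces pointwise to the average of the
conditional score gradients. -/
theorem sIS_pointwise_reduces_to_average_conditional_scores
    (dE dZ : ℕ) (hdE : 0 < dE) (hdZ : 0 < dZ)
    (p : EuclideanSpace ℝ (Fin dE) → ℝ)
    (q : EuclideanSpace ℝ (Fin dZ) → EuclideanSpace ℝ (Fin dE) → ℝ)
    (hp_nonneg : ∀ ε, 0 ≤ p ε)
    (hp_meas : Measurable p)
    (hp_int : ∫ ε, p ε = 1)
    (hq_meas : Measurable fun x : EuclideanSpace ℝ (Fin dZ) × EuclideanSpace ℝ (Fin dE) => q x.1 x.2)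
    (hq_nonneg : ∀ z ε, 0 ≤ q z ε)
    (hq_dens : ∀ ε, ∫ z', q z' ε = 1)
    (qZ : EuclideanSpace ℝ (Fin dZ) → ℝ)
    (hqZ : ∀ z', qZ z' = ∫ ε, p ε * q z' ε)
    (z : EuclideanSpace ℝ (Fin dZ))
    (hqZ_pos : 0 < qZ z)
    (k : ℕ) (hk : 1 ≤ k)
    (εs : Fin k → EuclideanSpace ℝ (Fin dE))
    (hcond_pos : ∀ i, 0 < p (εs i) * q z (εs i) / qZ z)
    (hdiff : ∀ i, DifferentiableAt ℝ (fun z' => q z' (εs i)) z)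
    (hq_pos : ∀ i, 0 < q z (εs i)) :
    gradient (fun z' =>
        Real.log ((1 / (k : ℝ)) * ∑ i : Fin k,
          p (εs i) * q z' (εs i) / (p (εs i) * q z (εs i) / qZ z))) z
      = (1 / (k : ℝ)) • ∑ i : Fin k,
          gradient (fun z' => Real.log (q z' (εs i))) z := by
  classical
  have hqZ_ne : qZ z ≠ 0 := ne_of_gt hqZ_pos
  have hq_ne : ∀ i, q z (εs i) ≠ 0 := fun i => ne_of_gt (hq_pos i)
  have hp_pos : ∀ i, 0 < p (εs i) := by
    intro i
    rcases lt_or_eq_of_le (hp_nonneg (εs i)) with h | h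
    · exact h
    · exfalso; have := hcond_pos i; rw [← h] at this; simp at this
  have hp_ne : ∀ i, p (εs i) ≠ 0 := fun i => ne_of_gt (hp_pos i)
  have hk' : (k : ℝ) ≠ 0 := Nat.cast_ne_zero.mpr (by omega)
  -- rewrite the inner function
  have hfun : ∀ z' : EuclideanSpace ℝ (Fin dZ), ((1 / (k : ℝ)) * ∑ i : Fin k,
      p (εs i) * q z' (εs i) / (p (εs i) * q z (εs i) / qZ z))
      = (1 / (k : ℝ)) * ∑ i : Fin k, (qZ z / q z (εs i)) * q z' (εs i) := by
    intro z'
    congr 1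
    refine Finset.sum_congr rfl fun i _ => ?_
    field_simp [hp_ne i, hq_ne i]
  set D : Fin k → (EuclideanSpace ℝ (Fin dZ) →L[ℝ] ℝ) := fun i => fderiv ℝ (fun z' => q z' (εs i)) z with hD
  have hDi : ∀ i, HasFDerivAt (fun z' => q z' (εs i)) (D i) z :=
    fun i => (hdiff i).hasFDerivAt
  -- derivative of the averaged function
  have hg : HasFDerivAt (fun z' : EuclideanSpace ℝ (Fin dZ) => (1 / (k : ℝ)) * ∑ i : Fin k, (qZ z / q z (εs i)) * q z' (εs i))
      ((1 / (k : ℝ)) • ∑ i : Fin k, (qZ z / q z (εs i)) • D i) z := by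
    refine HasFDerivAt.const_mul ?_ _
    exact HasFDerivAt.fun_sum fun i _ => (hDi i).const_mul _
  have hgz : ((1 / (k : ℝ)) * ∑ i : Fin k, (qZ z / q z (εs i)) * q z (εs i)) = qZ z := by
    have : ∀ i : Fin k, (qZ z / q z (εs i)) * q z (εs i) = qZ z := fun i =>
      div_mul_cancel₀ _ (hq_ne i)
    simp only [this, Finset.sum_const, Finset.card_univ, Fintype.card_fin, nsmul_eq_mul]
    field_simp
  have hlog : HasFDerivAt (fun z' : EuclideanSpace ℝ (Fin dZ) =>
      Real.log ((1 / (k : ℝ)) * ∑ i : Fin k, (qZ z / q z (εs i)) * q z' (εs i)))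
      ((qZ z)⁻¹ • ((1 / (k : ℝ)) • ∑ i : Fin k, (qZ z / q z (εs i)) • D i)) z := by
    have := hg.log (by rw [hgz]; exact hqZ_ne)
    rwa [hgz] at this
  have hLHS : HasFDerivAt (fun z' : EuclideanSpace ℝ (Fin dZ) =>
      Real.log ((1 / (k : ℝ)) * ∑ i : Fin k,
        p (εs i) * q z' (εs i) / (p (εs i) * q z (εs i) / qZ z)))
      ((qZ z)⁻¹ • ((1 / (k : ℝ)) • ∑ i : Fin k, (qZ z / q z (εs i)) • D i)) z := by
    have : (fun z' : EuclideanSpace ℝ (Fin dZ) => Real.log ((1 / (k : ℝ)) * ∑ i : Fin k,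
        p (εs i) * q z' (εs i) / (p (εs i) * q z (εs i) / qZ z)))
        = fun z' : EuclideanSpace ℝ (Fin dZ) => Real.log ((1 / (k : ℝ)) * ∑ i : Fin k, (qZ z / q z (εs i)) * q z' (εs i)) := by
      funext z'; rw [hfun z']
    rw [this]; exact hlog
  have hRHSi : ∀ i, HasFDerivAt (fun z' : EuclideanSpace ℝ (Fin dZ) => Real.log (q z' (εs i)))
      ((q z (εs i))⁻¹ • D i) z := fun i => (hDi i).log (hq_ne i)
  -- convert to gradients
  have hgradL := hLHS.hasGradientAt.gradient
  have hgradR : ∀ i, gradient (fun z' : EuclideanSpace ℝ (Fin dZ) => Real.log (q z' (εs i))) z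
      = (InnerProductSpace.toDual ℝ (EuclideanSpace ℝ (Fin dZ))).symm ((q z (εs i))⁻¹ • D i) :=
    fun i => (hRHSi i).hasGradientAt.gradient
  rw [hgradL]
  simp only [hgradR, _root_.map_smul, _root_.map_sum]
  rw [smul_comm ((qZ z)⁻¹) ((1:ℝ)/(k:ℝ))]
  congr 1
  rw [Finset.smul_sum]
  refine Finset.sum_congr rfl fun i _ => ?_
  rw [smul_smul]
  congr 1
  field_simp
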